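/- arXiv:2209.08086 — 2 statements merged into one kernel-verified Lean document; each statement's English description precedes it below -/
import Mathlib

section
/- Let k0 > 0, let f : ℝ³ → ℝ be integrable, and let R_s, R_t ∈ SO(3) with R_s·e3 = −R_t·e3. Then there exists α ∈ ℝ such that R_sᵀR_t = Q²(π)·Q³(α), and for any such α one has ν_{R_s}(S·Q(α)·k) = ν_{R_t}(k) for all k ∈ B, where S = diag(1, −1). -/
/-
Since `Rs e3 = -Rt e3`, the rotation `A = Rsᵀ Rt` sends `e3` to `-e3`, and an element of SO(3)
doing so is a half-turn about `e2` composed with a rotation about `e3`. For such `A`, the point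
`h(S Q(α) k)` is exactly `-A h(k)`: the map `k ↦ S Q(α) k` is a reflection of the plane, preserving
`‖k‖` and hence `κ(k)`. So `Rs h(S Q(α) k) = -Rt h(k)`, and Friedel's law gives equal energies.
-/


noncomputable section
open Real Set MeasureTheory
open scoped RealInnerProductSpace

abbrev R3 : Type := EuclideanSpace ℝ (Fin 3)
abbrev R2 : Type := EuclideanSpace ℝ (Fin 2)
abbrev Mat3 : Type := Matrix (Fin 3) (Fin 3) ℝ

def SO3 (R : Mat3) : Prop := R.transpose * R = 1 ∧ R.det = 1

def e3 : R3 := WithLp.toLp 2 (![0, 0, 1] : Fin 3 → ℝ)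

def act3 (R : Mat3) (x : R3) : R3 := WithLp.toLp 2 (R.mulVec x)

def cross3 (x y : R3) : R3 := WithLp.toLp 2 (crossProduct x y)

def rotE3 (R : Mat3) : R3 := act3 R e3

def v1 (Rs Rt : Mat3) : R3 := ‖rotE3 Rs + rotE3 Rt‖⁻¹ • (rotE3 Rs + rotE3 Rt)

def v2 (Rs Rt : Mat3) : R3 :=
  ‖cross3 (rotE3 Rs) (rotE3 Rt)‖⁻¹ • cross3 (rotE3 Rs) (rotE3 Rt)

def v3 (Rs Rt : Mat3) : R3 := ‖rotE3 Rs - rotE3 Rt‖⁻¹ • (rotE3 Rs - rotE3 Rt)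

def aRad (k0 : ℝ) (Rs Rt : Mat3) : ℝ := k0 / 2 * ‖rotE3 Rs + rotE3 Rt‖

def sigmaArc (k0 : ℝ) (Rs Rt : Mat3) (β : ℝ) : R3 :=
  (aRad k0 Rs Rt * (Real.cos β - 1)) • v1 Rs Rt + (aRad k0 Rs Rt * Real.sin β) • v2 Rs Rt

def cST (Rs Rt : Mat3) : ℝ := ⟪rotE3 Rs, rotE3 Rt⟫

def Jset (Rs Rt : Mat3) : Set ℝ :=
  if cST Rs Rt ≤ 0 then Ioc (-π) π
  else Ioo (-(Real.arccos ((cST Rs Rt - 1) / (cST Rs Rt + 1))))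
    (Real.arccos ((cST Rs Rt - 1) / (cST Rs Rt + 1)))

def kappa (k0 : ℝ) (k : R2) : ℝ := Real.sqrt (k0 ^ 2 - ‖k‖ ^ 2)

def hmap (k0 : ℝ) (k : R2) : R3 := WithLp.toLp 2 (![k 0, k 1, kappa k0 k - k0] : Fin 3 → ℝ)

def ball2 (k0 : ℝ) : Set R2 := {k | ‖k‖ < k0}

def Hemi (k0 : ℝ) (R : Mat3) : Set R3 := (fun k => act3 R (hmap k0 k)) '' ball2 k0

def Q2mat (α : ℝ) : Mat3 :=
  !![Real.cos α, 0, Real.sin α; 0, 1, 0; -Real.sin α, 0, Real.cos α]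

def Q3mat (α : ℝ) : Mat3 :=
  !![Real.cos α, -Real.sin α, 0; Real.sin α, Real.cos α, 0; 0, 0, 1]

/-- The 3D Fourier transform `𝓕f(y) = (2π)^{−3/2} ∫ f(x) e^{−i⟨x,y⟩} dx`. -/
def FT (f : R3 → ℝ) (y : R3) : ℂ :=
  ((2 * π : ℝ) ^ (-(3 : ℝ) / 2) : ℝ) *
    ∫ x : R3, (f x : ℂ) * Complex.exp (-Complex.I * (⟪x, y⟫ : ℝ))

/-- The scaled squared energy `ν_R(k) = |𝓕f(R·h(k))|²`. -/
def nu (k0 : ℝ) (f : R3 → ℝ) (R : Mat3) (k : R2) : ℝ :=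
  ‖FT f (act3 R (hmap k0 k))‖ ^ 2

def rot2 (α : ℝ) : Matrix (Fin 2) (Fin 2) ℝ :=
  !![Real.cos α, -Real.sin α; Real.sin α, Real.cos α]

def act2 (Q : Matrix (Fin 2) (Fin 2) ℝ) (k : R2) : R2 := WithLp.toLp 2 (Q.mulVec k)

def Smat : Matrix (Fin 2) (Fin 2) ℝ := !![1, 0; 0, -1]

open ComplexConjugate

theorem FT_neg (f : R3 → ℝ) (y : R3) : FT f (-y) = conj (FT f y) := by
  have hintegrand : ∀ x : R3, (f x : ℂ) * Complex.exp (-Complex.I * ((⟪x, -y⟫ : ℝ) : ℂ))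
      = conj ((f x : ℂ) * Complex.exp (-Complex.I * ((⟪x, y⟫ : ℝ) : ℂ))) := by
    intro x
    rw [map_mul, Complex.conj_ofReal, ← Complex.exp_conj, map_mul, map_neg, Complex.conj_I,
      Complex.conj_ofReal, inner_neg_right, Complex.ofReal_neg]
    ring_nf
  rw [FT, FT, map_mul, Complex.conj_ofReal, ← integral_conj]
  simp only [hintegrand]

theorem norm_FT_neg (f : R3 → ℝ) (y : R3) : ‖FT f (-y)‖ = ‖FT f y‖ := by
  rw [FT_neg, Complex.norm_conj]

theorem Real.exists_cos_sin_eq {a b : ℝ} (h : a ^ 2 + b ^ 2 = 1) :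
    ∃ θ : ℝ, Real.cos θ = a ∧ Real.sin θ = b := by
  obtain ⟨θ, hθ⟩ := (Complex.norm_eq_one_iff ⟨a, b⟩).mp (by
    rw [Complex.norm_def, Complex.normSq_mk, ← sq, ← sq, h, Real.sqrt_one])
  exact ⟨θ, by simpa using congrArg Complex.re hθ, by simpa using congrArg Complex.im hθ⟩

theorem act3_mul (A B : Mat3) (x : R3) : act3 (A * B) x = act3 A (act3 B x) := by
  simp only [act3, Matrix.mulVec_mulVec]

theorem act3_neg (A : Mat3) (x : R3) : act3 A (-x) = -act3 A x := by
  simp only [act3, WithLp.ofLp_neg, Matrix.mulVec_neg, WithLp.toLp_neg]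

theorem act3_one (x : R3) : act3 1 x = x := by
  simp only [act3, Matrix.one_mulVec]

namespace SO3

variable {R R' : Mat3}

theorem mul_transpose (hR : SO3 R) : R * R.transpose = 1 := mul_eq_one_comm.mp hR.1

theorem transpose_mul (hR : SO3 R) (hR' : SO3 R') : SO3 (R.transpose * R') := by
  refine ⟨?_, ?_⟩
  · rw [Matrix.transpose_mul, Matrix.transpose_transpose, Matrix.mul_assoc,
      ← Matrix.mul_assoc R, hR.mul_transpose, Matrix.one_mul, hR'.1]
  · rw [Matrix.det_mul, Matrix.det_transpose, hR.2, hR'.2, one_mul]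

theorem act3_transpose_act3 (hR : SO3 R) (x : R3) : act3 R.transpose (act3 R x) = x := by
  rw [← act3_mul, hR.1, act3_one]

/-- Orthogonality turns `A e3 = -e3` into `Aᵀ e3 = -e3`, so both the third column and the third
row of `A` are `(0, 0, -1)`; the upper-left block is then a reflection, by orthogonality and
`det A = 1`. -/
theorem exists_eq_Q2mat_pi_mul_Q3mat {A : Mat3} (hA : SO3 A) (he3 : act3 A e3 = -e3) :
    ∃ α : ℝ, A = Q2mat π * Q3mat α := by
  have hcol : ∀ i, A i 2 = -e3 i := fun i => by
    simpa [act3, e3, Matrix.mulVec, dotProduct, Fin.sum_univ_three] using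
      congrArg (· i) he3
  have hrow : ∀ i, A 2 i = -e3 i := fun i => by
    have h := hA.act3_transpose_act3 e3
    rw [he3, act3_neg, neg_eq_iff_eq_neg] at h
    simpa [act3, e3, Matrix.mulVec, dotProduct, Fin.sum_univ_three] using congrArg (· i) h
  have h02 : A 0 2 = 0 := by simpa [e3] using hcol 0
  have h12 : A 1 2 = 0 := by simpa [e3] using hcol 1
  have h22 : A 2 2 = -1 := by simpa [e3] using hcol 2
  have h20 : A 2 0 = 0 := by simpa [e3] using hrow 0
  have h21 : A 2 1 = 0 := by simpa [e3] using hrow 1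
  have hunit : A 0 0 ^ 2 + A 0 1 ^ 2 = 1 := by
    simpa [Matrix.mul_apply, Fin.sum_univ_three, h02, sq] using
      congrFun (congrFun hA.mul_transpose 0) 0
  have horth : A 0 0 * A 1 0 + A 0 1 * A 1 1 = 0 := by
    simpa [Matrix.mul_apply, Fin.sum_univ_three, h02, h12] using
      congrFun (congrFun hA.mul_transpose 0) 1
  have hdet : A 0 0 * A 1 1 - A 0 1 * A 1 0 = -1 := by
    have h := hA.2
    rw [Matrix.det_fin_three, h02, h12, h20, h21, h22] at h
    linarith
  have h10 : A 1 0 = A 0 1 := by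
    linear_combination (-A 1 0) * hunit + A 0 0 * horth - A 0 1 * hdet
  have h11 : A 1 1 = -A 0 0 := by
    linear_combination (-A 1 1) * hunit + A 0 1 * horth + A 0 0 * hdet
  obtain ⟨α, hcos, hsin⟩ := Real.exists_cos_sin_eq (a := -A 0 0) (b := A 0 1) (by linarith)
  refine ⟨α, ?_⟩
  ext i j
  fin_cases i <;> fin_cases j <;>
    simp [Q2mat, Q3mat, Matrix.mul_apply, Fin.sum_univ_three, hcos, hsin, h02, h12, h20, h21,
      h22, h10, h11]

end SO3

theorem Q2mat_pi_mul_Q3mat (α : ℝ) : Q2mat π * Q3mat α =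
    !![-Real.cos α, Real.sin α, 0; Real.sin α, Real.cos α, 0; 0, 0, -1] := by
  ext i j
  fin_cases i <;> fin_cases j <;>
    simp [Q2mat, Q3mat, Matrix.mul_apply, Fin.sum_univ_three]

theorem act2_Smat_mul_rot2_apply_zero (α : ℝ) (k : R2) :
    act2 (Smat * rot2 α) k 0 = Real.cos α * k 0 - Real.sin α * k 1 := by
  simp [act2, Smat, rot2, dotProduct, Fin.sum_univ_two]
  ring

theorem act2_Smat_mul_rot2_apply_one (α : ℝ) (k : R2) :
    act2 (Smat * rot2 α) k 1 = -Real.sin α * k 0 - Real.cos α * k 1 := by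
  simp [act2, Smat, rot2, dotProduct, Fin.sum_univ_two]
  ring

theorem norm_act2_Smat_mul_rot2 (α : ℝ) (k : R2) : ‖act2 (Smat * rot2 α) k‖ = ‖k‖ := by
  rw [EuclideanSpace.norm_eq, EuclideanSpace.norm_eq]
  congr 1
  simp only [Fin.sum_univ_two, Real.norm_eq_abs, sq_abs, act2_Smat_mul_rot2_apply_zero,
    act2_Smat_mul_rot2_apply_one]
  linear_combination (k 0 ^ 2 + k 1 ^ 2) * Real.sin_sq_add_cos_sq α

theorem hmap_act2_Smat_mul_rot2 (k0 α : ℝ) (k : R2) :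
    hmap k0 (act2 (Smat * rot2 α) k) = -act3 (Q2mat π * Q3mat α) (hmap k0 k) := by
  have hkappa : kappa k0 (act2 (Smat * rot2 α) k) = kappa k0 k := by
    rw [kappa, kappa, norm_act2_Smat_mul_rot2]
  rw [Q2mat_pi_mul_Q3mat]
  ext i
  fin_cases i <;>
    simp [act3, hmap, hkappa,
      act2_Smat_mul_rot2_apply_zero, act2_Smat_mul_rot2_apply_one] <;>
    ring

theorem special_case_minus_general (k0 : ℝ) (f : R3 → ℝ)
    (Rs Rt : Mat3) (hRs : SO3 Rs) (hRt : SO3 Rt)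
    (heq : rotE3 Rs = -rotE3 Rt) :
    (∃ α : ℝ, Rs.transpose * Rt = Q2mat π * Q3mat α) ∧
    (∀ α : ℝ, Rs.transpose * Rt = Q2mat π * Q3mat α →
      ∀ k ∈ ball2 k0, nu k0 f Rs (act2 (Smat * rot2 α) k) = nu k0 f Rt k) := by
  have hRsA : Rs * (Rs.transpose * Rt) = Rt := by
    rw [← Matrix.mul_assoc, hRs.mul_transpose, Matrix.one_mul]
  refine ⟨(hRs.transpose_mul hRt).exists_eq_Q2mat_pi_mul_Q3mat ?_, ?_⟩
  · rw [act3_mul, ← rotE3, ← neg_neg (rotE3 Rt), ← heq, rotE3, act3_neg,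
      hRs.act3_transpose_act3]
  · intro α hA k _
    have hpoint : act3 Rs (hmap k0 (act2 (Smat * rot2 α) k)) = -act3 Rt (hmap k0 k) := by
      rw [hmap_act2_Smat_mul_rot2, ← hA, act3_neg, ← act3_mul, hRsA]
    rw [nu, nu, hpoint, norm_FT_neg]

/-- Proposition: special case `Rs·e3 = −Rt·e3`.
There exists `α` with `Rsᵀ Rt = Q²(π)·Q³(α)`, and for any such `α`,
`ν_{Rs}(S·Q(α)·k) = ν_{Rt}(k)` for all `k ∈ B`, where `S = diag(1, −1)`. -/
theorem special_case_minus (k0 : ℝ) (hk0 : 0 < k0) (f : R3 → ℝ)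
    (hf : MeasureTheory.Integrable f) (Rs Rt : Mat3) (hRs : SO3 Rs) (hRt : SO3 Rt)
    (heq : rotE3 Rs = -rotE3 Rt) :
    (∃ α : ℝ, Rs.transpose * Rt = Q2mat π * Q3mat α) ∧
    (∀ α : ℝ, Rs.transpose * Rt = Q2mat π * Q3mat α →
      ∀ k ∈ ball2 k0, nu k0 f Rs (act2 (Smat * rot2 α) k) = nu k0 f Rt k) :=
  special_case_minus_general k0 f Rs Rt hRs hRt heq
end
end

section
/- Let k0 > 0, f : ℝ³ → ℝ be integrable with compact support, R : ℝ → SO(3) be continuously differentiable with angular velocity ω_t, and fix t ∈ ℝ. Suppose φ = (φ₁, φ₂) ∈ S¹₊ and ρ, ζ ∈ ℝ satisfy ∂_t ν_t(r·φ) = (ρ·(k0 − √(k0² − r²)) + r·ζ) · ⟨∇ν_t(r·φ), (−φ₂, φ₁)⟩ for all r ∈ (−k0, k0); suppose φ is the unique element of S¹₊ for which real numbers with this property exist; and suppose the set { r ∈ (−k0, k0) : r ≠ 0 and ⟨∇ν_t(r·φ), (−φ₂, φ₁)⟩ ≠ 0 } has at least two elements. Then ω_t = (ρ·φ₁, ρ·φ₂,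 ζ). -/
noncomputable section
open Real Set MeasureTheory
open scoped RealInnerProductSpace

/-- The half unit circle `S¹₊ = {(cos α, sin α) : α ∈ [0, π)}`. -/
def S1plus : Set R2 :=
  {v | ∃ α : ℝ, 0 ≤ α ∧ α < π ∧ v = (![Real.cos α, Real.sin α] : Fin 2 → ℝ)}

/-- Rotation of a planar vector by 90 degrees: `(φ₁, φ₂) ↦ (−φ₂, φ₁)`. -/
def rot90 (v : R2) : R2 := WithLp.toLp 2 (![-(v 1), v 0] : Fin 2 → ℝ)

/-!
Differentiating `s ↦ ν_s(k)` gives the derivative of `|𝓕f|²` at `R_t h(k)` in the direction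
`R_t' h(k) = R_t (ω_t × h(k))`. When `(ω₁, ω₂) = ρ₀ φ` and `k = r φ`, this vector is
`(ρ₀ (k0 - κ) + r ω₃) • R_t (-φ₂, φ₁, 0)`, and `(-φ₂, φ₁, 0)` is the derivative of `h` at `k` in the
tangential direction `(-φ₂, φ₁)`, because the last coordinate of `h` depends only on `‖k‖`.
So the relation holds for the direction of `(ω₁, ω₂)` in `S¹₊`, which by uniqueness is `φ`.
Subtracting it from the given relation at two admissible radii forces `ρ = ρ₀` and `ζ = ω₃`,
since the points `(r, k0 - κ)` lie on a circle through the origin.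
-/

open scoped FourierTransform

lemma integrable_norm_mul_norm_of_hasCompactSupport {E F : Type*} [NormedAddCommGroup E]
    [MeasurableSpace E] [OpensMeasurableSpace E] [NormedAddCommGroup F] {μ : Measure E}
    {f : E → F} (hf : Integrable f μ) (hsupp : HasCompactSupport f) :
    Integrable (fun x => ‖x‖ * ‖f x‖) μ := by
  refine (integrableOn_iff_integrable_of_support_subset fun x hx => ?_).mp
    (hf.norm.integrableOn.continuousOn_mul continuous_norm.continuousOn hsupp)
  exact subset_tsupport f (norm_ne_zero_iff.mp (right_ne_zero_of_mul hx))

lemma FT_eq_fourier (f : R3 → ℝ) (y : R3) :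
    FT f y = ((2 * π : ℝ) ^ (-(3 : ℝ) / 2) : ℝ) * 𝓕 (fun x => (f x : ℂ)) ((2 * π)⁻¹ • y) := by
  rw [FT, Real.fourier_eq']
  congr 1
  refine integral_congr_ae (Filter.Eventually.of_forall fun x => ?_)
  have hπ : -2 * π * ((2 * π)⁻¹ * ⟪x, y⟫) = -⟪x, y⟫ := by field_simp
  simp only [inner_smul_right, smul_eq_mul, hπ]
  rw [mul_comm]
  push_cast
  ring_nf

lemma differentiable_FT {f : R3 → ℝ} (hf : Integrable f)
    (hxf : Integrable fun x => ‖x‖ * ‖f x‖) : Differentiable ℝ (FT f) := by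
  have hxf' : Integrable fun x => ‖x‖ * ‖(f x : ℂ)‖ := by
    simpa only [Complex.norm_real] using hxf
  have hscale : Differentiable ℝ fun y : R3 => (2 * π)⁻¹ • y :=
    (differentiable_id (𝕜 := ℝ)).const_smul ((2 * π)⁻¹ : ℝ)
  rw [funext (FT_eq_fourier f)]
  exact ((Real.differentiable_fourier hf.ofReal hxf').comp hscale).const_mul _

lemma hasDerivAt_euclidean {ι : Type*} [Fintype ι] {c : ℝ → EuclideanSpace ℝ ι}
    {c' : EuclideanSpace ℝ ι} {t : ℝ} (h : ∀ i, HasDerivAt (fun s => c s i) (c' i) t) :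
    HasDerivAt c c' t :=
  (PiLp.continuousLinearEquiv 2 ℝ fun _ : ι => ℝ).symm.hasFDerivAt.comp_hasDerivAt t
    (hasDerivAt_pi.mpr h)

lemma act3_smul (M : Mat3) (c : ℝ) (x : R3) : act3 M (c • x) = c • act3 M x :=
  map_smul (Matrix.toEuclideanCLM (𝕜 := ℝ) M) c x

lemma hasDerivAt_act3 {R R' : ℝ → Mat3} {t : ℝ}
    (hR : ∀ i j, HasDerivAt (fun s => R s i j) (R' t i j) t) (x : R3) :
    HasDerivAt (fun s => act3 (R s) x) (act3 (R' t) x) t :=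
  hasDerivAt_euclidean fun i => by
    simpa only [act3, Matrix.mulVec, dotProduct] using
      HasDerivAt.fun_sum (u := Finset.univ) fun j _ => (hR i j).mul_const (x j)

lemma act3_eq_act3_cross3 {M M' : Mat3} {w : R3} (hM : M.transpose * M = 1)
    (hw : ∀ y, act3 (M.transpose * M') y = cross3 w y) (x : R3) :
    act3 M' x = act3 M (cross3 w x) := by
  rw [← hw, act3, act3, act3, Matrix.mulVec_mulVec, ← Matrix.mul_assoc,
    mul_eq_one_comm.mp hM, Matrix.one_mul]

lemma hasDerivAt_comp_act3 {F : Type*} [NormedAddCommGroup F] [NormedSpace ℝ F]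
    {g : R3 → F} (hg : Differentiable ℝ g) {R R' : ℝ → Mat3} {t : ℝ} {w : R3}
    (hR : (R t).transpose * R t = 1) (hderiv : ∀ i j, HasDerivAt (fun s => R s i j) (R' t i j) t)
    (hw : ∀ y, act3 ((R t).transpose * R' t) y = cross3 w y) (x : R3) :
    HasDerivAt (fun s => g (act3 (R s) x))
      (fderiv ℝ g (act3 (R t) x) (act3 (R t) (cross3 w x))) t := by
  rw [← act3_eq_act3_cross3 hR hw]
  exact (hg _).hasFDerivAt.comp_hasDerivAt t (hasDerivAt_act3 hderiv x)

def lift3 (v : R2) : R3 := WithLp.toLp 2 ![v 0, v 1, 0]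

lemma differentiableAt_hmap {k0 : ℝ} {k : R2} (hk : ‖k‖ < k0) :
    DifferentiableAt ℝ (hmap k0) k := by
  have hκ : k0 ^ 2 - ‖k‖ ^ 2 ≠ 0 := by nlinarith [norm_nonneg k]
  rw [differentiableAt_euclidean]
  intro i
  fin_cases i
  · exact (EuclideanSpace.proj (𝕜 := ℝ) (0 : Fin 2)).differentiableAt
  · exact (EuclideanSpace.proj (𝕜 := ℝ) (1 : Fin 2)).differentiableAt
  · exact (((differentiableAt_const _).sub (differentiableAt_id.norm_sq ℝ)).sqrt hκ).sub_const k0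

lemma hasLineDerivAt_hmap {k0 : ℝ} {k v : R2} (hk : ‖k‖ < k0) (hkv : ⟪k, v⟫ = 0) :
    HasLineDerivAt ℝ (hmap k0) (lift3 v) k v := by
  have hκ : k0 ^ 2 - ‖k‖ ^ 2 ≠ 0 := by nlinarith [norm_nonneg k]
  have hline : HasDerivAt (fun u : ℝ => k + u • v) v 0 := by
    simpa using ((hasDerivAt_id (0 : ℝ)).smul_const v).const_add k
  refine hasDerivAt_euclidean fun i => ?_
  fin_cases i
  · exact (EuclideanSpace.proj (𝕜 := ℝ) (0 : Fin 2)).hasFDerivAt.comp_hasDerivAt 0 hline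
  · exact (EuclideanSpace.proj (𝕜 := ℝ) (1 : Fin 2)).hasFDerivAt.comp_hasDerivAt 0 hline
  · have hsq := (hline.norm_sq.const_sub (k0 ^ 2)).sqrt (by simpa using hκ)
    simpa [hkv, lift3, hmap, kappa] using hsq.sub_const k0

lemma inner_gradient_comp_hmap {g : R3 → ℝ} (hg : Differentiable ℝ g) (M : Mat3) {k0 : ℝ}
    {k v : R2} (hk : ‖k‖ < k0) (hkv : ⟪k, v⟫ = 0) :
    ⟪gradient (fun k => g (act3 M (hmap k0 k))) k, v⟫
      = fderiv ℝ g (act3 M (hmap k0 k)) (act3 M (lift3 v)) := by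
  have hM : HasFDerivAt (act3 M) (Matrix.toEuclideanCLM (𝕜 := ℝ) M) (hmap k0 k) :=
    (Matrix.toEuclideanCLM (𝕜 := ℝ) M).hasFDerivAt
  have hF : DifferentiableAt ℝ (fun k => g (act3 M (hmap k0 k))) k :=
    (hg _).comp k (hM.differentiableAt.comp k (differentiableAt_hmap hk))
  have hline : HasLineDerivAt ℝ (fun k => g (act3 M (hmap k0 k)))
      (fderiv ℝ g (act3 M (hmap k0 k)) (act3 M (lift3 v))) k v :=
    (hg _).hasFDerivAt.comp_hasDerivAt_of_eq 0
      (hM.comp_hasDerivAt_of_eq 0 (hasLineDerivAt_hmap hk hkv) (by simp)) (by simp)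
  rw [← (hF.hasFDerivAt.hasLineDerivAt v).unique hline]
  exact InnerProductSpace.toDual_symm_apply

lemma inner_rot90_self (φ : R2) : ⟪φ, rot90 φ⟫ = 0 := by
  simp [rot90, EuclideanSpace.inner_eq_star_dotProduct, dotProduct, Fin.sum_univ_two]
  ring

lemma cross3_hmap_smul {k0 r ρ : ℝ} {φ : R2} (hφ : ‖φ‖ = 1) {w : R3}
    (h0 : w 0 = ρ * φ 0) (h1 : w 1 = ρ * φ 1) :
    cross3 w (hmap k0 (r • φ))
      = (ρ * (k0 - √(k0 ^ 2 - r ^ 2)) + r * w 2) • lift3 (rot90 φ) := by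
  have hκ : kappa k0 (r • φ) = √(k0 ^ 2 - r ^ 2) := by
    rw [kappa, norm_smul, mul_pow, hφ, Real.norm_eq_abs, sq_abs, one_pow, mul_one]
  ext i
  fin_cases i <;>
    simp [cross3, cross_apply, hmap, hκ, h0, h1, lift3, rot90] <;> ring

def CommonCircleRelation (k0 : ℝ) (f : R3 → ℝ) (R : ℝ → Mat3) (t : ℝ) (φ : R2) (ρ ζ : ℝ) :
    Prop :=
  ∀ r ∈ Ioo (-k0) k0,
    deriv (fun s => nu k0 f (R s) (r • φ)) t
      = (ρ * (k0 - Real.sqrt (k0 ^ 2 - r ^ 2)) + r * ζ)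
          * ⟪gradient (nu k0 f (R t)) (r • φ), rot90 φ⟫

theorem commonCircleRelation_of_angular_velocity {k0 : ℝ} {f : R3 → ℝ} (hf : Integrable f)
    (hsupp : HasCompactSupport f) {R R' : ℝ → Mat3} {t : ℝ} (hR : (R t).transpose * R t = 1)
    (hderiv : ∀ i j, HasDerivAt (fun s => R s i j) (R' t i j) t) {w : R3}
    (hw : ∀ y, act3 ((R t).transpose * R' t) y = cross3 w y) {φ : R2} (hφ : ‖φ‖ = 1) {ρ : ℝ}
    (h0 : w 0 = ρ * φ 0) (h1 : w 1 = ρ * φ 1) :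
    CommonCircleRelation k0 f R t φ ρ (w 2) := by
  intro r hr
  set g : R3 → ℝ := fun y => ‖FT f y‖ ^ 2
  have hg : Differentiable ℝ g :=
    (differentiable_FT hf (integrable_norm_mul_norm_of_hasCompactSupport hf hsupp)).norm_sq ℝ
  have hk : ‖r • φ‖ < k0 := by
    rw [norm_smul, hφ, mul_one, Real.norm_eq_abs]
    exact abs_lt.mpr hr
  have hkv : ⟪r • φ, rot90 φ⟫ = 0 := by rw [inner_smul_left, inner_rot90_self, mul_zero]
  calc deriv (fun s => g (act3 (R s) (hmap k0 (r • φ)))) t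
      = fderiv ℝ g (act3 (R t) (hmap k0 (r • φ)))
          (act3 (R t) (cross3 w (hmap k0 (r • φ)))) :=
        (hasDerivAt_comp_act3 hg hR hderiv hw _).deriv
    _ = (ρ * (k0 - √(k0 ^ 2 - r ^ 2)) + r * w 2)
          * fderiv ℝ g (act3 (R t) (hmap k0 (r • φ))) (act3 (R t) (lift3 (rot90 φ))) := by
        rw [cross3_hmap_smul hφ h0 h1, act3_smul, map_smul, smul_eq_mul]
    _ = _ := congrArg _ (inner_gradient_comp_hmap hg (R t) hk hkv).symm

/-- A line `a s + b r = 0` through the origin meets the circle `r² + (s - k0)² = k0²` in at most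
one further point. -/
lemma eq_zero_of_circle_points_mem_line {k0 r₁ r₂ s₁ s₂ a b : ℝ}
    (hs₁ : s₁ ^ 2 - 2 * k0 * s₁ + r₁ ^ 2 = 0) (hs₂ : s₂ ^ 2 - 2 * k0 * s₂ + r₂ ^ 2 = 0)
    (hr₁ : r₁ ≠ 0) (hr₂ : r₂ ≠ 0) (hr : r₁ ≠ r₂)
    (e₁ : a * s₁ + r₁ * b = 0) (e₂ : a * s₂ + r₂ * b = 0) : a = 0 ∧ b = 0 := by
  have q₁ : r₁ * (b ^ 2 + a ^ 2) + 2 * k0 * (a * b) = 0 := by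
    refine (mul_eq_zero.mp ?_).resolve_left hr₁
    linear_combination a ^ 2 * hs₁ + (2 * k0 * a - a * s₁ + r₁ * b) * e₁
  have q₂ : r₂ * (b ^ 2 + a ^ 2) + 2 * k0 * (a * b) = 0 := by
    refine (mul_eq_zero.mp ?_).resolve_left hr₂
    linear_combination a ^ 2 * hs₂ + (2 * k0 * a - a * s₂ + r₂ * b) * e₂
  have hab : b ^ 2 + a ^ 2 = 0 :=
    (mul_eq_zero.mp (by linear_combination q₁ - q₂)).resolve_left (sub_ne_zero.mpr hr)
  constructor <;> nlinarith [sq_nonneg a, sq_nonneg b]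

lemma sagitta_mem_circle {k0 r : ℝ} (hr : r ∈ Ioo (-k0) k0) :
    (k0 - √(k0 ^ 2 - r ^ 2)) ^ 2 - 2 * k0 * (k0 - √(k0 ^ 2 - r ^ 2)) + r ^ 2 = 0 := by
  have h : √(k0 ^ 2 - r ^ 2) ^ 2 = k0 ^ 2 - r ^ 2 :=
    Real.sq_sqrt (by nlinarith [hr.1, hr.2])
  linear_combination h

theorem CommonCircleRelation.unique {k0 : ℝ} {f : R3 → ℝ} {R : ℝ → Mat3} {t : ℝ} {φ : R2}
    {ρ ζ ρ' ζ' : ℝ} (h : CommonCircleRelation k0 f R t φ ρ ζ)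
    (h' : CommonCircleRelation k0 f R t φ ρ' ζ')
    (hset : Set.Nontrivial {r : ℝ | r ∈ Ioo (-k0) k0 ∧ r ≠ 0 ∧
      ⟪gradient (nu k0 f (R t)) (r • φ), rot90 φ⟫ ≠ 0}) :
    ρ = ρ' ∧ ζ = ζ' := by
  have hdiff : ∀ r ∈ {r : ℝ | r ∈ Ioo (-k0) k0 ∧ r ≠ 0 ∧
      ⟪gradient (nu k0 f (R t)) (r • φ), rot90 φ⟫ ≠ 0},
      (ρ - ρ') * (k0 - √(k0 ^ 2 - r ^ 2)) + r * (ζ - ζ') = 0 := by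
    rintro r ⟨hr, -, hgrad⟩
    linear_combination mul_right_cancel₀ hgrad ((h r hr).symm.trans (h' r hr))
  obtain ⟨r₁, hr₁, r₂, hr₂, hr⟩ := hset
  obtain ⟨hρ, hζ⟩ := eq_zero_of_circle_points_mem_line (sagitta_mem_circle hr₁.1)
    (sagitta_mem_circle hr₂.1) hr₁.2.1 hr₂.2.1 hr (hdiff r₁ hr₁) (hdiff r₂ hr₂)
  exact ⟨sub_eq_zero.mp hρ, sub_eq_zero.mp hζ⟩

lemma norm_eq_one_of_mem_S1plus {φ : R2} (hφ : φ ∈ S1plus) : ‖φ‖ = 1 := by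
  obtain ⟨α, -, -, hα⟩ := hφ
  rw [EuclideanSpace.norm_eq, Fin.sum_univ_two, hα]
  simp

lemma exists_mem_S1plus_of_im_pos (z : ℂ) (hz : 0 < z.im) :
    ∃ φ ∈ S1plus, z.re = ‖z‖ * φ 0 ∧ z.im = ‖z‖ * φ 1 :=
  ⟨WithLp.toLp 2 ![cos z.arg, sin z.arg], ⟨z.arg, Complex.arg_nonneg_iff.mpr hz.le,
    Complex.arg_lt_pi_iff.mpr (Or.inr hz.ne'), rfl⟩,
    by simp [Complex.norm_mul_cos_arg], by simp [Complex.norm_mul_sin_arg]⟩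

lemma exists_eq_smul_mem_S1plus (x y : ℝ) :
    ∃ ρ, ∃ φ ∈ S1plus, x = ρ * φ 0 ∧ y = ρ * φ 1 := by
  rcases lt_trichotomy y 0 with hy | rfl | hy
  · obtain ⟨φ, hφ, hx, hy⟩ := exists_mem_S1plus_of_im_pos ⟨-x, -y⟩ (by simpa using hy)
    exact ⟨-‖(⟨-x, -y⟩ : ℂ)‖, φ, hφ, by linarith, by linarith⟩
  · exact ⟨x, WithLp.toLp 2 ![cos 0, sin 0], ⟨0, le_rfl, pi_pos, rfl⟩, by simp, by simp⟩
  · exact ⟨_, exists_mem_S1plus_of_im_pos ⟨x, y⟩ hy⟩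

theorem reconstruction_angular_velocity_general (k0 : ℝ) (f : R3 → ℝ)
    (hf : MeasureTheory.Integrable f) (hsupp : HasCompactSupport f)
    (R R' : ℝ → Mat3) (hSO : ∀ t, SO3 (R t))
    (hderiv : ∀ t i j, HasDerivAt (fun s => R s i j) (R' t i j) t)
    (ω : ℝ → R3)
    (hω : ∀ t (y : R3), act3 ((R t).transpose * R' t) y = cross3 (ω t) y)
    (t : ℝ) (φ : R2) (ρ ζ : ℝ)
    (heq : ∀ r ∈ Ioo (-k0) k0,
      deriv (fun s => nu k0 f (R s) (r • φ)) t
        = (ρ * (k0 - Real.sqrt (k0 ^ 2 - r ^ 2)) + r * ζ)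
            * ⟪gradient (nu k0 f (R t)) (r • φ), rot90 φ⟫)
    (huniq : ∀ φ' ∈ S1plus,
      (∃ ρ' ζ' : ℝ, ∀ r ∈ Ioo (-k0) k0,
        deriv (fun s => nu k0 f (R s) (r • φ')) t
          = (ρ' * (k0 - Real.sqrt (k0 ^ 2 - r ^ 2)) + r * ζ')
              * ⟪gradient (nu k0 f (R t)) (r • φ'), rot90 φ'⟫) → φ' = φ)
    (hset : Set.Nontrivial
      {r : ℝ | r ∈ Ioo (-k0) k0 ∧ r ≠ 0 ∧
        ⟪gradient (nu k0 f (R t)) (r • φ), rot90 φ⟫ ≠ 0}) :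
    ω t = (![ρ * φ 0, ρ * φ 1, ζ] : Fin 3 → ℝ) := by
  obtain ⟨ρ₀, φ₀, hφ₀, h0, h1⟩ := exists_eq_smul_mem_S1plus (ω t 0) (ω t 1)
  have hrel : CommonCircleRelation k0 f R t φ₀ ρ₀ (ω t 2) :=
    commonCircleRelation_of_angular_velocity hf hsupp (hSO t).1 (hderiv t) (hω t)
      (norm_eq_one_of_mem_S1plus hφ₀) h0 h1
  obtain rfl := huniq φ₀ hφ₀ ⟨ρ₀, ω t 2, hrel⟩
  obtain ⟨rfl, hζ⟩ := CommonCircleRelation.unique heq hrel hset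
  ext i
  fin_cases i <;> simp [h0, h1, hζ]

/-- Theorem: reconstruction of the angular velocity `ω_t`.
If `φ ∈ S¹₊` is the unique direction for which parameters `ρ, ζ` with the infinitesimal
common circle relation exist, and the set
`{ r ∈ (−k0, k0) : r ≠ 0, ⟨∇ν_t(r φ), (−φ₂, φ₁)⟩ ≠ 0 }` has at least two elements,
then `ω_t = (ρ φ₁, ρ φ₂, ζ)`. -/
theorem reconstruction_angular_velocity (k0 : ℝ) (hk0 : 0 < k0) (f : R3 → ℝ)
    (hf : MeasureTheory.Integrable f) (hsupp : HasCompactSupport f)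
    (R R' : ℝ → Mat3) (hSO : ∀ t, SO3 (R t))
    (hderiv : ∀ t i j, HasDerivAt (fun s => R s i j) (R' t i j) t)
    (hcont : ∀ i j, Continuous fun t => R' t i j)
    (ω : ℝ → R3)
    (hω : ∀ t (y : R3), act3 ((R t).transpose * R' t) y = cross3 (ω t) y)
    (t : ℝ) (φ : R2) (hφ : φ ∈ S1plus) (ρ ζ : ℝ)
    (heq : ∀ r ∈ Ioo (-k0) k0,
      deriv (fun s => nu k0 f (R s) (r • φ)) t
        = (ρ * (k0 - Real.sqrt (k0 ^ 2 - r ^ 2)) + r * ζ)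
            * ⟪gradient (nu k0 f (R t)) (r • φ), rot90 φ⟫)
    (huniq : ∀ φ' ∈ S1plus,
      (∃ ρ' ζ' : ℝ, ∀ r ∈ Ioo (-k0) k0,
        deriv (fun s => nu k0 f (R s) (r • φ')) t
          = (ρ' * (k0 - Real.sqrt (k0 ^ 2 - r ^ 2)) + r * ζ')
              * ⟪gradient (nu k0 f (R t)) (r • φ'), rot90 φ'⟫) → φ' = φ)
    (hset : Set.Nontrivial
      {r : ℝ | r ∈ Ioo (-k0) k0 ∧ r ≠ 0 ∧
        ⟪gradient (nu k0 f (R t)) (r • φ), rot90 φ⟫ ≠ 0}) :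
    ω t = (![ρ * φ 0, ρ * φ 1, ζ] : Fin 3 → ℝ) :=
  reconstruction_angular_velocity_general k0 f hf hsupp R R' hSO hderiv ω hω t φ ρ ζ heq huniq hset
end
end
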